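/- For every t ∈ (0,1] the set L_t := f_u⁻¹(t) ∩ cl_{S_u}(f_u⁻¹([0,t))) is connected, and for every t ∈ [0,1) the set R_t := f_u⁻¹(t) ∩ cl_{S_u}(f_u⁻¹((t,1])) is connected. -/

import Mathlib

open Set Topology

noncomputable section

/-- A set is an `Fσ` set if it is a countable union of closed sets. -/
def IsFSigma {X : Type*} [TopologicalSpace X] (s : Set X) : Prop :=
  ∃ F : ℕ → Set X, (∀ n, IsClosed (F n)) ∧ s = ⋃ n, F n

/-- A topological space is an `F`-space if any two disjoint open `Fσ` subsets
have disjoint closures. -/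
def IsFSpace (X : Type*) [TopologicalSpace X] : Prop :=
  ∀ s t : Set X, IsOpen s → IsOpen t → IsFSigma s → IsFSigma t → Disjoint s t →
    Disjoint (closure s) (closure t)

/-- `𝐒 = ℕ × [0,1]²` where `ℕ` is discrete and `[0,1]` is the unit interval. -/
abbrev bS : Type := ℕ × (unitInterval × unitInterval)

/-- `βπ : β𝐒 → βℕ`, the Stone–Čech extension of the projection `π(n,x,y) = n`. -/
def betaPi : StoneCech bS → StoneCech ℕ :=
  stoneCechExtend (continuous_stoneCechUnit.comp continuous_fst)

/-- `βf : β𝐒 → [0,1]`, the Stone–Čech extension of `f(n,x,y) = x`. -/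
def betaF : StoneCech bS → unitInterval :=
  stoneCechExtend (continuous_fst.comp continuous_snd)

/-- `S_u = βπ⁻¹(u)`, as a subset of `β𝐒` (carrying the subspace topology). -/
def Su (u : StoneCech ℕ) : Set (StoneCech bS) := betaPi ⁻¹' {u}

/-- `f_u : S_u → [0,1]`, the restriction of `βf` to `S_u`. -/
def fu (u : StoneCech ℕ) : (Su u) → unitInterval := fun z => betaF z.1

/-- `L_t = f_u⁻¹(t) ∩ cl_{S_u} f_u⁻¹([0,t))`. -/
def Lset (u : StoneCech ℕ) (t : unitInterval) : Set (Su u) :=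
  fu u ⁻¹' {t} ∩ closure (fu u ⁻¹' (Set.Ico 0 t))

/-- `R_t = f_u⁻¹(t) ∩ cl_{S_u} f_u⁻¹((t,1])`. -/
def Rset (u : StoneCech ℕ) (t : unitInterval) : Set (Su u) :=
  fu u ⁻¹' {t} ∩ closure (fu u ⁻¹' (Set.Ioc t 1))

/-- The rectangle `P_{s,r} = S_u ∩ cl_{β𝐒}(ℕ × [s,r] × I)`, viewed as a subset of `S_u`. -/
def Pset (u : StoneCech ℕ) (s r : unitInterval) : Set (Su u) :=
  Subtype.val ⁻¹' closure (stoneCechUnit '' {p : bS | p.2.1 ∈ Set.Icc s r})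

/-- `L_{s,t} = cl_{S_u}(⋃_{s<r<t} P_{s,r})`. -/
def Lst (u : StoneCech ℕ) (s t : unitInterval) : Set (Su u) :=
  closure (⋃ r ∈ Set.Ioo s t, Pset u s r)

/-- The interior of `B` in the subspace `A`, viewed as a subset of the ambient space. -/
def relInt {Y : Type*} [TopologicalSpace Y] (A B : Set Y) : Set Y :=
  Subtype.val '' interior ((Subtype.val : A → Y) ⁻¹' B)

/-- The transfinite sequence `X_α ⊆ S_u`: `X_0 = S_u`,
`X_{α+1} = X_α \ ⋃_{t} Int_{X_α}(X_α ∩ f_u⁻¹(t))`, and `X_λ = ⋂_{β<λ} X_β` at limits. -/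
def Xseq (u : StoneCech ℕ) : Ordinal → Set (Su u) := fun α =>
  Ordinal.limitRecOn α Set.univ
    (fun _ Xa => Xa \ ⋃ t : unitInterval, relInt Xa (Xa ∩ fu u ⁻¹' {t}))
    (fun o _ ih => ⋂ (β : {β : Ordinal // β < o}), ih β.1 β.2)

/-- The bottom line `B_u = S_u ∩ cl_{β𝐒}(ℕ × I × {0})`, viewed as a subset of `S_u`. -/
def Bu (u : StoneCech ℕ) : Set (Su u) :=
  Subtype.val ⁻¹' closure (stoneCechUnit '' {p : bS | p.2.2 = 0})

/-- The top line `T_u = S_u ∩ cl_{β𝐒}(ℕ × I × {1})`, viewed as a subset of `S_u`. -/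
def Tu (u : StoneCech ℕ) : Set (Su u) :=
  Subtype.val ⁻¹' closure (stoneCechUnit '' {p : bS | p.2.2 = 1})

/-! For `s < t` the sets `L_{s,t} = cl(⋃_{s<r<t} P_{s,r})` are continua, being closures of
increasing unions of the connected rectangles `P_{s,r}`; they decrease as `s` increases to `t`,
and `L_t = ⋂_{s<t} L_{s,t}`. A directed intersection of continua in a Hausdorff space is a
continuum. `R_t` is `L_t` for the reversed order on `[0,1]`. -/

theorem isConnected_iInter_of_directed {Y ι : Type*} [TopologicalSpace Y] [T2Space Y]
    [Nonempty ι] {K : ι → Set Y}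
    (hdir : Directed (· ⊇ ·) K) (hcpt : ∀ i, IsCompact (K i)) (hconn : ∀ i, IsConnected (K i)) :
    IsConnected (⋂ i, K i) := by
  have hclosed : ∀ i, IsClosed (K i) := fun i => (hcpt i).isClosed
  obtain ⟨i₀⟩ := ‹Nonempty ι›
  refine ⟨IsCompact.nonempty_iInter_of_directed_nonempty_isCompact_isClosed K hdir
    (fun i => (hconn i).nonempty) hcpt hclosed, ?_⟩
  have hInter : IsCompact (⋂ i, K i) := (hcpt i₀).of_isClosed_subset
    (isClosed_iInter hclosed) (iInter_subset K i₀)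
  rw [isPreconnected_iff_subset_of_fully_disjoint_closed hInter.isClosed]
  intro A B hA hB hAB hdisj
  obtain ⟨U, V, hU, hV, hAU, hBV, hUV⟩ := SeparatedNhds.of_isCompact_isCompact
    (hInter.inter_right hA) (hInter.inter_right hB)
    (hdisj.mono inter_subset_right inter_subset_right)
  -- the separation of `⋂ i, K i` by `U` and `V` already separates some `K i`
  obtain ⟨i, hi⟩ : ∃ i, K i ⊆ U ∪ V := exists_subset_nhds_of_isCompact' hdir hcpt hclosed
    fun x hx => (hU.union hV).mem_nhds <| (hAB hx).imp (fun hxA => hAU ⟨hx, hxA⟩)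
      fun hxB => hBV ⟨hx, hxB⟩
  refine ((hconn i).isPreconnected.subset_or_subset hU hV hUV hi).imp (fun hKU x hx => ?_)
    fun hKV x hx => ?_
  · exact (hAB hx).resolve_right fun hxB =>
      hUV.le_bot ⟨hKU (iInter_subset K i hx), hBV ⟨hx, hxB⟩⟩
  · exact (hAB hx).resolve_left fun hxA =>
      hUV.le_bot ⟨hAU ⟨hx, hxA⟩, hKV (iInter_subset K i hx)⟩

section Layer

variable {Y α : Type*} [TopologicalSpace Y] [LinearOrder α] [DenselyOrdered α] {g : Y → α}
  {P : α → α → Set Y}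

theorem isConnected_closure_biUnion_Ioo (hPconn : ∀ s r, s < r → IsConnected (P s r))
    (hPmono : ∀ s, Monotone (P s)) {s t : α} (hst : s < t) :
    IsConnected (closure (⋃ r ∈ Ioo s t, P s r)) := by
  obtain ⟨r₀, hr₀⟩ := exists_between hst
  refine IsConnected.closure ⟨(hPconn s r₀ hr₀.1).nonempty.mono
    (subset_biUnion_of_mem (u := P s) hr₀), ?_⟩
  rw [← sUnion_image]
  refine IsPreconnected.sUnion_directed ?_ (forall_mem_image.2 fun r hr =>
    (hPconn s r hr.1).isPreconnected)
  rintro _ ⟨r₁, hr₁, rfl⟩ _ ⟨r₂, hr₂, rfl⟩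
  exact ⟨P s (max r₁ r₂), mem_image_of_mem _ ⟨hr₁.1.trans_le (le_max_left _ _),
    max_lt hr₁.2 hr₂.2⟩, hPmono s (le_max_left _ _), hPmono s (le_max_right _ _)⟩

variable [TopologicalSpace α] [OrderClosedTopology α]

theorem preimage_singleton_inter_closure_preimage_Iio_eq_iInter (hg : Continuous g)
    (hPval : ∀ s r, P s r ⊆ g ⁻¹' Icc s r) (hPmem : ∀ w s r, s < g w → g w < r → w ∈ P s r)
    {s₀ t : α} (hs₀ : s₀ < t) :
    g ⁻¹' {t} ∩ closure (g ⁻¹' Iio t) = ⋂ s : Iio t, closure (⋃ r ∈ Ioo s.1 t, P s r) := by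
  have hL : ∀ s, closure (⋃ r ∈ Ioo s t, P s r) ⊆ g ⁻¹' Icc s t ∩ closure (g ⁻¹' Iio t) := by
    intro s
    refine (closure_mono (t := g ⁻¹' Icc s t ∩ g ⁻¹' Iio t) fun x hx => ?_).trans <|
      (closure_inter_subset_inter_closure _ _).trans <|
        inter_subset_inter_left _ (isClosed_Icc.preimage hg).closure_subset
    obtain ⟨r, hr, hxr⟩ := mem_iUnion₂.1 hx
    obtain ⟨hsx, hxr⟩ := hPval s r hxr
    exact ⟨⟨hsx, hxr.trans hr.2.le⟩, hxr.trans_lt hr.2⟩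
  ext z
  refine ⟨fun ⟨hzt, hzcl⟩ => mem_iInter.2 fun ⟨s, hs⟩ => ?_, fun hz => ?_⟩
  · have hzs : z ∈ g ⁻¹' Ioi s ∩ closure (g ⁻¹' Iio t) :=
      ⟨show s < g z from (show g z = t from hzt) ▸ hs, hzcl⟩
    refine closure_mono ?_ ((isOpen_Ioi.preimage hg).inter_closure hzs)
    rintro w ⟨hws, hwt⟩
    obtain ⟨r, hwr, hrt⟩ := exists_between (show g w < t from hwt)
    exact mem_biUnion ⟨hws.trans hwr, hrt⟩ (hPmem w s r hws hwr)
  · have hzL : ∀ s, s < t → z ∈ g ⁻¹' Icc s t ∩ closure (g ⁻¹' Iio t) :=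
      fun s hs => hL s (mem_iInter.1 hz ⟨s, hs⟩)
    refine ⟨le_antisymm (hzL s₀ hs₀).1.2 ?_, (hzL s₀ hs₀).2⟩
    exact le_of_forall_lt_imp_le_of_dense fun s hs => (hzL s hs).1.1

theorem isConnected_preimage_singleton_inter_closure_preimage_Iio [T2Space Y] [CompactSpace Y]
    (hg : Continuous g) (hPconn : ∀ s r, s < r → IsConnected (P s r))
    (hPmono : ∀ ⦃s s' r r'⦄, s' ≤ s → r ≤ r' → P s r ⊆ P s' r')
    (hPval : ∀ s r, P s r ⊆ g ⁻¹' Icc s r) (hPmem : ∀ w s r, s < g w → g w < r → w ∈ P s r)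
    {s₀ t : α} (hs₀ : s₀ < t) :
    IsConnected (g ⁻¹' {t} ∩ closure (g ⁻¹' Iio t)) := by
  rw [preimage_singleton_inter_closure_preimage_Iio_eq_iInter hg hPval hPmem hs₀]
  have : Nonempty (Iio t) := ⟨⟨s₀, hs₀⟩⟩
  refine isConnected_iInter_of_directed (fun s s' => ⟨⟨max s s', max_lt s.2 s'.2⟩, ?_, ?_⟩)
    (fun _ => isClosed_closure.isCompact)
    fun s => isConnected_closure_biUnion_Ioo hPconn (fun _ _ _ h => hPmono le_rfl h) s.2
  all_goals
    exact closure_mono <| biUnion_mono (Ioo_subset_Ioo_left (by simp)) fun _ _ =>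
      hPmono (by simp) le_rfl

end Layer

theorem continuous_betaF : Continuous betaF := continuous_stoneCechExtend _

theorem betaF_stoneCechUnit (p : bS) : betaF (stoneCechUnit p) = p.2.1 :=
  congrFun (stoneCechExtend_extends (continuous_fst.comp continuous_snd)) p

theorem continuous_fu (u : StoneCech ℕ) : Continuous (fu u) :=
  continuous_betaF.comp continuous_subtype_val

theorem compactSpace_Su (u : StoneCech ℕ) : CompactSpace (Su u) :=
  isCompact_iff_compactSpace.1 <|
    (isClosed_singleton.preimage (continuous_stoneCechExtend _)).isCompact

theorem Pset_mono {u : StoneCech ℕ} ⦃s s' r r' : unitInterval⦄ (hs : s' ≤ s) (hr : r ≤ r') :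
    Pset u s r ⊆ Pset u s' r' :=
  fun _ hw => closure_mono (image_mono (s := {p : bS | p.2.1 ∈ Icc s r})
    fun _ hp => Icc_subset_Icc hs hr hp) hw

theorem Pset_subset_preimage_Icc (u : StoneCech ℕ) (s r : unitInterval) :
    Pset u s r ⊆ fu u ⁻¹' Icc s r := by
  refine fun w hw => closure_minimal ?_ (isClosed_Icc.preimage continuous_betaF) hw
  rintro _ ⟨p, hp, rfl⟩
  rwa [mem_preimage, betaF_stoneCechUnit]

theorem mem_Pset_of_lt_of_lt {u : StoneCech ℕ} {w : Su u} {s r : unitInterval}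
    (hs : s < fu u w) (hr : fu u w < r) : w ∈ Pset u s r := by
  have hw : w.1 ∈ betaF ⁻¹' Ioo s r ∩ closure (range (stoneCechUnit : bS → StoneCech bS)) :=
    ⟨⟨hs, hr⟩, (denseRange_stoneCechUnit (α := bS)).closure_range ▸ mem_univ _⟩
  refine closure_mono ?_ ((isOpen_Ioo.preimage continuous_betaF).inter_closure hw)
  rintro _ ⟨hp, p, rfl⟩
  rw [mem_preimage, betaF_stoneCechUnit] at hp
  exact ⟨p, Ioo_subset_Icc_self hp, rfl⟩

theorem Lset_Rset_isConnected_general (u : StoneCech ℕ)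
    (hP : ∀ s r : unitInterval, s < r → IsConnected (Pset u s r)) :
    (∀ t : unitInterval, 0 < t → IsConnected (Lset u t)) ∧
    (∀ t : unitInterval, t < 1 → IsConnected (Rset u t)) := by
  have := compactSpace_Su u
  refine ⟨fun t ht => ?_, fun t ht => ?_⟩
  · have hIco : Ico 0 t = Iio t := by ext x; simp
    have h := isConnected_preimage_singleton_inter_closure_preimage_Iio (continuous_fu u) hP
      Pset_mono (Pset_subset_preimage_Icc u) (fun _ _ _ => mem_Pset_of_lt_of_lt) ht
    rwa [Lset, hIco]
  · have hIoc : Ioc t 1 = Ioi t := by ext x; simp [unitInterval.le_one']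
    have h := isConnected_preimage_singleton_inter_closure_preimage_Iio
      (g := fun w => OrderDual.toDual (fu u w)) (P := fun s r => Pset u r.ofDual s.ofDual)
      (continuous_toDual.comp (continuous_fu u)) (fun _ _ h => hP _ _ h)
      (fun _ _ _ _ hs hr => Pset_mono hr hs)
      (fun _ _ _ hw => (Pset_subset_preimage_Icc u _ _ hw).symm)
      (fun _ _ _ hs hr => mem_Pset_of_lt_of_lt hr hs)
      (s₀ := OrderDual.toDual 1) (t := OrderDual.toDual t) ht
    rwa [Rset, hIoc]

/-- For every `t ∈ (0,1]` the set `L_t` is connected, and for every `t ∈ [0,1)` the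
set `R_t` is connected. -/
theorem Lset_Rset_isConnected (u : StoneCech ℕ)
    (hu : ∀ n : ℕ, u ≠ stoneCechUnit n)
    (hne : (Su u).Nonempty) (hcomp : IsCompact (Su u)) (hconn : IsConnected (Su u))
    (hFsp : IsFSpace (Su u))
    (hP : ∀ s r : unitInterval, s < r → IsConnected (Pset u s r)) :
    (∀ t : unitInterval, 0 < t → IsConnected (Lset u t)) ∧
    (∀ t : unitInterval, t < 1 → IsConnected (Rset u t)) :=
  Lset_Rset_isConnected_general u hP

end
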